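/- arXiv:0912.2865 — 4 statements merged into one kernel-verified Lean document; each statement's English description precedes it below -/
import Mathlib

section
/- Let f : A₁ → A₂ be an isogeny of abelian varieties over a field k of characteristic 0, of degree d. Then the induced map f* : Br(Ā₂) → Br(Ā₁) on the Brauer groups of the base changes to an algebraic closure k̄ is a surjective homomorphism of Galois modules whose kernel is killed by d; in particular it restricts to an isomorphism on the subgroups of elements of order coprime to d. -/
/-!
Restriction–corestriction kills the kernel of `f*` by `d`, so the kernel is finite. A homomorphism
with finite kernel between two copies of `(ℚ/ℤ)^m` is onto: counting inside the preimage of the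
`n`-torsion, divisibility of the source shows that the image of that preimage is as large as the
whole `n`-torsion of the target. On torsion prime to `d` the map is injective because its kernel is
`d`-torsion, and a Bézout multiple of any preimage is a preimage that is again prime-to-`d`
torsion.
-/

open AddSubgroup Function

theorem AddSubgroup.card_eq_card_map_mul_card_ker {A C : Type*} [AddGroup A] [AddGroup C]
    (g : A →+ C) {S : AddSubgroup A} (hS : g.ker ≤ S) :
    Nat.card S = Nat.card (S.map g) * Nat.card g.ker := by
  rw [← card_mul_index (g.domRestrict S).ker, index_ker, AddMonoidHom.domRestrict_range,
    AddMonoidHom.ker_domRestrict, Nat.card_congr (addSubgroupOfEquivOfLe hS).toEquiv, mul_comm]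

section TorsionBy

variable {A B : Type*} [AddCommGroup A] [AddCommGroup B]

def AddEquiv.torsionByCongr (e : A ≃+ B) (n : ℤ) : torsionBy A n ≃ torsionBy B n :=
  e.toEquiv.subtypeEquiv fun x => by
    simp [Submodule.mem_torsionBy_iff, ← map_zsmul]

/-- Counting in `S = f⁻¹(B[n])`: multiplication by `n` maps `S` onto `ker f` with kernel `A[n]`,
so `|f(S)| · |ker f| = |S| = |ker f| · |A[n]|`, and `f(S) ⊆ B[n]` has the size of `B[n]`. -/
theorem AddMonoidHom.torsionBy_le_range [DivisibleBy A ℤ] (f : A →+ B) [Finite f.ker]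
    {n : ℕ} (hn : n ≠ 0) [Finite (torsionBy B n)]
    (hcard : Nat.card (torsionBy A n) = Nat.card (torsionBy B n)) :
    torsionBy B n ≤ f.range := by
  set S := (torsionBy B n).comap f
  have hker_le : f.ker ≤ S := f.ker_le_comap _
  have htors_le : (nsmulAddMonoidHom n : A →+ A).ker ≤ S := fun x hx => by
    simp_all [S, ← map_nsmul]
  have hmap_nsmul : S.map (nsmulAddMonoidHom n) = f.ker := by
    ext k
    constructor
    · rintro ⟨x, hx, rfl⟩
      simpa [S, torsionBy.nsmul_iff] using hx
    · intro hk
      obtain ⟨z, rfl⟩ := DivisibleBy.surjective_smul A ℤ (Int.natCast_ne_zero.mpr hn) k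
      refine ⟨z, ?_, (natCast_zsmul z n).symm⟩
      simpa [S, torsionBy.nsmul_iff, ← map_nsmul] using hk
  have hker_nsmul : (nsmulAddMonoidHom n : A →+ A).ker = torsionBy A n := by
    ext x; simp
  have hcount :
      Nat.card (S.map f) * Nat.card f.ker = Nat.card f.ker * Nat.card (torsionBy B n) := by
    rw [← card_eq_card_map_mul_card_ker f hker_le, card_eq_card_map_mul_card_ker _ htors_le,
      hmap_nsmul, hker_nsmul, hcard]
  have hmap_eq : S.map f = torsionBy B n :=
    eq_of_le_of_card_ge (map_comap_le _ _)
      (Nat.eq_of_mul_eq_mul_left Nat.card_pos (by rw [mul_comm, hcount])).ge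
  exact hmap_eq ▸ map_le_range _ _

theorem AddMonoidHom.surjective_of_finite_ker [DivisibleBy A ℤ] (f : A →+ B) [Finite f.ker]
    (e : A ≃+ B) (htors : IsAddTorsion B) (hfin : ∀ n : ℕ, n ≠ 0 → Finite (torsionBy B n)) :
    Surjective f := by
  intro y
  obtain ⟨n, hn, hny⟩ := (htors y).exists_nsmul_eq_zero
  have := hfin n hn.ne'
  exact f.torsionBy_le_range hn.ne' (Nat.card_congr (e.torsionByCongr n))
    (torsionBy.nsmul_iff.mpr hny)

theorem AddMonoidHom.bijOn_coprime_torsion (f : A →+ B) (hf : Surjective f) {d : ℕ}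
    (hker : f.ker ≤ torsionBy A d) :
    Set.BijOn f {x | ∃ n : ℕ, 0 < n ∧ n.Coprime d ∧ n • x = 0}
      {y | ∃ n : ℕ, 0 < n ∧ n.Coprime d ∧ n • y = 0} := by
  have hker' : ∀ x, f x = 0 → d • x = 0 := fun x hx => torsionBy.nsmul_iff.mp (hker hx)
  refine ⟨?_, ?_, ?_⟩
  · rintro x ⟨n, hn, hnd, hnx⟩
    exact ⟨n, hn, hnd, by rw [← map_nsmul, hnx, map_zero]⟩
  · rintro x ⟨n, -, hnd, hnx⟩ x' ⟨n', -, hnd', hnx'⟩ hxx'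
    rw [← sub_eq_zero]
    refine (nsmul_eq_zero_iff_of_coprime (hnd.mul_left hnd')).mp ⟨?_, hker' _ (by simp [hxx'])⟩
    rw [smul_sub, mul_nsmul, hnx, mul_nsmul', hnx', nsmul_zero, nsmul_zero, sub_zero]
  · rintro y ⟨n, hn, hnd, hny⟩
    obtain ⟨x, rfl⟩ := hf y
    obtain ⟨a, b, hab⟩ := Nat.isCoprime_iff_coprime.mpr hnd
    -- `b * d ≡ 1 [ZMOD n]` and `b * d ≡ 0 [ZMOD d]`
    refine ⟨(b * d) • x, ⟨n, hn, hnd, ?_⟩, ?_⟩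
    · rw [← natCast_zsmul, smul_smul, mul_comm, mul_assoc, mul_smul, mul_smul, natCast_zsmul,
        natCast_zsmul, hker' _ (by rw [map_nsmul, hny]), zsmul_zero]
    · rw [map_zsmul, show b * d = 1 - a * n by linear_combination hab, sub_smul, one_smul,
        mul_smul, natCast_zsmul, hny, zsmul_zero, sub_zero]

end TorsionBy

theorem IsAddTorsion.pi {ι G : Type*} [Finite ι] [AddMonoid G] (hG : IsAddTorsion G) :
    IsAddTorsion (ι → G) :=
  fun x => IsOfFinAddOrder.pi fun i => hG (x i)

theorem AddSubgroup.finite_torsionBy_pi {ι G : Type*} [Finite ι] [AddCommGroup G] {n : ℕ}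
    [Finite (torsionBy G n)] : Finite (torsionBy (ι → G) n) :=
  Finite.of_injective (fun x i => (⟨x.1 i, torsionBy.nsmul_iff.mpr
      (congrFun (torsionBy.nsmul_iff.mp x.2) i)⟩ : torsionBy G n))
    fun _ _ hxy => Subtype.ext <| funext fun i => congrArg Subtype.val (congrFun hxy i)

namespace AddCircle

variable (p : ℚ)

theorem isAddTorsion_rat [Fact (0 < p)] : IsAddTorsion (AddCircle p) := fun x =>
  QuotientAddGroup.induction_on x fun q =>
    isOfFinAddOrder_iff_exists_rat_eq_div.mpr ⟨q / p, by simp⟩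

theorem finite_torsionBy {n : ℕ} (hn : n ≠ 0) : Finite (torsionBy (AddCircle p) n) :=
  ((finite_torsion p (Nat.pos_of_ne_zero hn)).subset fun _ => torsionBy.nsmul_iff.mp).to_subtype

end AddCircle

theorem statement_1_general
    -- `Br(Ā₁)` and `Br(Ā₂)` with their `Γ_k`-actions:
    (BrA₁ BrA₂ : Type) [AddCommGroup BrA₁] [AddCommGroup BrA₂]
    -- both are isomorphic to `(ℚ/ℤ)^m`:
    (m : ℕ) (e₁ : BrA₁ ≃+ (Fin m → AddCircle (1 : ℚ)))
    (e₂ : BrA₂ ≃+ (Fin m → AddCircle (1 : ℚ)))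
    -- the degree of the isogeny:
    (d : ℕ) (hd : 0 < d)
    -- the pullback `f*` along the isogeny `f : A₁ → A₂`, a map of
    -- `Γ_k`-modules:
    (fstar : BrA₂ →+ BrA₁)
    -- restriction-corestriction for the degree-`d` isogeny `f`:
    (cores : BrA₁ →+ BrA₂)
    (hcores : ∀ x : BrA₂, cores (fstar x) = (d : ℤ) • x) :
    -- `f*` is surjective and its kernel is killed by `d` …
    Function.Surjective fstar ∧
    (∀ x : BrA₂, fstar x = 0 → (d : ℤ) • x = 0) ∧
    -- … so it restricts to an isomorphism on elements of order coprime to `d`: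
    Set.BijOn fstar
      {x : BrA₂ | ∃ n : ℕ, 0 < n ∧ n.Coprime d ∧ n • x = 0}
      {y : BrA₁ | ∃ n : ℕ, 0 < n ∧ n.Coprime d ∧ n • y = 0} := by
  have hfin : ∀ n : ℕ, n ≠ 0 → Finite (torsionBy (Fin m → AddCircle (1 : ℚ)) n) := fun n hn =>
    have := AddCircle.finite_torsionBy 1 hn
    finite_torsionBy_pi
  have hker : fstar.ker ≤ torsionBy BrA₂ d := fun x hx =>
    show (d : ℤ) • x = 0 by rw [← hcores x, AddMonoidHom.mem_ker.mp hx, map_zero]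
  have : Finite (torsionBy BrA₂ d) :=
    have := hfin d hd.ne'
    .of_equiv _ (e₂.torsionByCongr d).symm
  have : Finite fstar.ker := .of_injective _ (inclusion_injective hker)
  let : DivisibleBy BrA₂ ℤ := e₂.symm.surjective.divisibleBy _ fun x n => map_zsmul e₂.symm n x
  have hsurj : Function.Surjective fstar :=
    fstar.surjective_of_finite_ker (e₂.trans e₁.symm)
      ((AddCircle.isAddTorsion_rat 1).pi.of_surjective (f := e₁.symm.toAddMonoidHom)
        e₁.symm.surjective)
      fun n hn => have := hfin n hn; .of_equiv _ (e₁.torsionByCongr n).symm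
  exact ⟨hsurj, fun x hx => hker hx, fstar.bijOn_coprime_torsion hsurj hker⟩

theorem statement_1 (k : Type) [Field k] [CharZero k]
    -- `Br(Ā₁)` and `Br(Ā₂)` with their `Γ_k`-actions:
    (BrA₁ BrA₂ : Type) [AddCommGroup BrA₁] [AddCommGroup BrA₂]
    (ρ₁ : (AlgebraicClosure k ≃ₐ[k] AlgebraicClosure k) →* Multiplicative (AddAut BrA₁))
    (ρ₂ : (AlgebraicClosure k ≃ₐ[k] AlgebraicClosure k) →* Multiplicative (AddAut BrA₂))
    -- both are isomorphic to `(ℚ/ℤ)^m`: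
    (m : ℕ) (e₁ : BrA₁ ≃+ (Fin m → AddCircle (1 : ℚ)))
    (e₂ : BrA₂ ≃+ (Fin m → AddCircle (1 : ℚ)))
    -- the degree of the isogeny:
    (d : ℕ) (hd : 0 < d)
    -- the pullback `f*` along the isogeny `f : A₁ → A₂`, a map of
    -- `Γ_k`-modules:
    (fstar : BrA₂ →+ BrA₁)
    (hequiv : ∀ σ x, fstar (Multiplicative.toAdd (ρ₂ σ) x) = Multiplicative.toAdd (ρ₁ σ) (fstar x))
    -- restriction-corestriction for the degree-`d` isogeny `f`:
    (cores : BrA₁ →+ BrA₂)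
    (hcores : ∀ x : BrA₂, cores (fstar x) = (d : ℤ) • x) :
    -- `f*` is surjective and its kernel is killed by `d` …
    Function.Surjective fstar ∧
    (∀ x : BrA₂, fstar x = 0 → (d : ℤ) • x = 0) ∧
    -- … so it restricts to an isomorphism on elements of order coprime to `d`:
    Set.BijOn fstar
      {x : BrA₂ | ∃ n : ℕ, 0 < n ∧ n.Coprime d ∧ n • x = 0}
      {y : BrA₁ | ∃ n : ℕ, 0 < n ∧ n.Coprime d ∧ n • y = 0} :=
  statement_1_general BrA₁ BrA₂ m e₁ e₂ d hd fstar cores hcores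
end

section
/- Any homomorphism of abelian groups (ℚ/ℤ)^m → (ℚ/ℤ)^m with finite kernel is surjective. -/
/-!
Let `G = (ℚ/ℤ)^m`, let `y ∈ G` have order `n`, and let `G[n]` be the (finite) `n`-torsion.
Since `j` commutes with multiplication by `n`, the kernel of `n • j = j ∘ (n • ·)` can be counted
in two ways: as `|ker j| · |G[n] ∩ im j|`, and, because `n • ·` is onto the divisible group `G`,
as `|G[n]| · |ker j|`. As `ker j` is finite, `G[n] ⊆ im j`, so `y ∈ im j`.
-/

theorem AddMonoidHom.card_ker_comp {G H K : Type*} [AddGroup G] [AddGroup H] [AddGroup K]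
    (f : H →+ K) (g : G →+ H) :
    Nat.card (f.comp g).ker = Nat.card g.ker * Nat.card (f.ker ⊓ g.range : AddSubgroup H) := by
  have hle : g.ker ≤ (f.comp g).ker := fun x hx => by simp_all
  rw [← AddSubgroup.relIndex_bot_left, ← AddSubgroup.relIndex_bot_left,
    ← AddSubgroup.relIndex_mul_relIndex _ _ _ bot_le hle, AddSubgroup.relIndex_ker,
    ← AddMonoidHom.comap_ker, AddSubgroup.map_comap_eq, inf_comm]

theorem AddMonoidHom.ker_nsmul_le_range {G : Type*} [AddCommGroup G] {n : ℕ}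
    [Finite (nsmulAddMonoidHom n : G →+ G).ker]
    (hdiv : Function.Surjective (nsmulAddMonoidHom n : G →+ G)) (j : G →+ G) [Finite j.ker] :
    (nsmulAddMonoidHom n : G →+ G).ker ≤ j.range := by
  set σ : G →+ G := nsmulAddMonoidHom n
  have hcomm : σ.comp j = j.comp σ := by ext x; simp [σ]
  have hcard : Nat.card (σ.ker ⊓ j.range : AddSubgroup G) = Nat.card σ.ker := by
    have h := σ.card_ker_comp j
    rw [hcomm, AddMonoidHom.card_ker_comp, AddMonoidHom.range_eq_top.mpr hdiv, inf_top_eq,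
      mul_comm] at h
    exact (Nat.eq_of_mul_eq_mul_left Nat.card_pos h).symm
  exact inf_eq_left.mp (AddSubgroup.eq_of_le_of_card_ge inf_le_left hcard.ge)

theorem DivisibleBy.surjective_nsmul {G : Type*} [AddCommGroup G] [DivisibleBy G ℤ] {n : ℕ}
    (hn : n ≠ 0) : Function.Surjective (fun x : G => n • x) := fun x =>
  ⟨DivisibleBy.div x (n : ℤ), by
    simpa using DivisibleBy.div_cancel x (Int.natCast_ne_zero.mpr hn)⟩

theorem AddMonoidHom.surjective_of_finite_ker_s2 {G : Type*} [AddCommGroup G] [DivisibleBy G ℤ]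
    (htors : IsAddTorsion G) (hfin : ∀ n : ℕ, 0 < n → {x : G | n • x = 0}.Finite)
    (j : G →+ G) [Finite j.ker] : Function.Surjective j := by
  intro y
  have hn := (htors y).addOrderOf_pos
  have : Finite (nsmulAddMonoidHom (addOrderOf y) : G →+ G).ker := (hfin _ hn).to_subtype
  exact ker_nsmul_le_range (DivisibleBy.surjective_nsmul hn.ne') j (addOrderOf_nsmul_eq_zero y)

theorem AddCircle.isAddTorsion_rat_s2 (p : ℚ) [Fact (0 < p)] : IsAddTorsion (AddCircle p) := by
  intro x
  induction x using QuotientAddGroup.induction_on with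
  | H q =>
    rw [← addOrderOf_pos_iff, ← div_mul_cancel₀ q (Fact.out : 0 < p).ne', ← Rat.cast_id (q / p),
      AddCircle.addOrderOf_coe_rat]
    exact (q / p).pos

theorem Set.finite_setOf_nsmul_eq_zero_pi {ι A : Type*} [Finite ι] [AddMonoid A] {n : ℕ}
    (h : {a : A | n • a = 0}.Finite) : {x : ι → A | n • x = 0}.Finite := by
  convert Set.Finite.pi (t := fun _ : ι => {a : A | n • a = 0}) fun _ => h using 1
  ext x
  simp [funext_iff]

theorem statement_2_general (m : ℕ)
    (j : (Fin m → AddCircle (1 : ℚ)) →+ (Fin m → AddCircle (1 : ℚ)))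
    (hker : (j.ker : Set (Fin m → AddCircle (1 : ℚ))).Finite) :
    Function.Surjective j := by
  have : Finite j.ker := hker.to_subtype
  refine j.surjective_of_finite_ker_s2 (fun x => ?_) fun n hn => ?_
  · exact IsOfFinAddOrder.pi fun i => AddCircle.isAddTorsion_rat_s2 1 (x i)
  · exact Set.finite_setOf_nsmul_eq_zero_pi (AddCircle.finite_torsion 1 hn)

theorem statement_2 (m : ℕ) (hm : 0 < m)
    (j : (Fin m → AddCircle (1 : ℚ)) →+ (Fin m → AddCircle (1 : ℚ)))
    (hker : (j.ker : Set (Fin m → AddCircle (1 : ℚ))).Finite) :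
    Function.Surjective j :=
  statement_2_general m j hker
end

section
/- Let b₁, …, b_n and d be nonzero rational numbers, and let F = ℚ(√−1, ⁴√b₁, …, ⁴√b_n) ⊂ ℚ̄. Then the polynomial t⁴ − d splits completely in F if and only if the class of d in ℚ*/ℚ*⁴ belongs to the subgroup generated by the classes of −4 and b₁, …, b_n. -/
/-
If `β ^ 2 = w ∈ K`, every `α ∈ K(β)` is `x + yβ`, and the `β`-coordinate of `α ^ 4` is
`4xy(x² + y²w)`. So if `α ^ 4 ∈ K`, either `β ∈ K` or that coordinate
vanishes, and `α ^ 4` is, modulo `K*⁴`, one of `1`, `w²`, `-4`. Once `√-1 ∈ K`, `-4 = (1 + √-1)⁴`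
is a fourth power, so adjoining a fourth root `β` of `b` through the two quadratic steps
`K ⊂ K(β²) ⊂ K(β)` only contributes powers of `b`. Descending through
`ℚ(√-1, ⁴√b₁, …, ⁴√bₙ) ⊃ … ⊃ ℚ(√-1) ⊃ ℚ` gives the forward direction, the last step producing
the power of `-4`. Conversely `(1 + √-1)^e₀ ∏ ⁴√bᵢ^eᵢ q` is a fourth root of `d`, and the four
roots of `t⁴ - d` differ by powers of `√-1`.
-/

open Polynomial IntermediateField

theorem one_add_pow_four_of_sq_eq_neg_one {R : Type*} [CommRing R] {i : R} (hi : i ^ 2 = -1) :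
    (1 + i) ^ 4 = -4 := by
  linear_combination (i ^ 2 + 4 * i + 5) * hi

section FourthRoots

variable {K L : Type*} [Field K] [Field L] [Algebra K L]

theorem exists_eq_add_mul_of_mem_adjoin_of_sq_eq {w : K} {β : L}
    (hβ : β ^ 2 = algebraMap K L w) {α : L} (hα : α ∈ K⟮β⟯) :
    ∃ x y : K, α = algebraMap K L x + algebraMap K L y * β := by
  have hint : IsIntegral K β := .of_pow two_pos (hβ ▸ isIntegral_algebraMap)
  rw [← mem_toSubalgebra, adjoin_simple_toSubalgebra_of_isAlgebraic hint.isAlgebraic] at hα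
  induction hα using Algebra.adjoin_induction with
  | mem z hz =>
    rw [Set.mem_singleton_iff] at hz
    exact ⟨0, 1, by simp [hz]⟩
  | algebraMap z => exact ⟨z, 0, by simp⟩
  | add _ _ _ _ ha hb =>
    obtain ⟨x, y, rfl⟩ := ha
    obtain ⟨x', y', rfl⟩ := hb
    exact ⟨x + x', y + y', by simp only [map_add]; ring⟩
  | mul _ _ _ _ ha hb =>
    obtain ⟨x, y, rfl⟩ := ha
    obtain ⟨x', y', rfl⟩ := hb
    refine ⟨x * x' + y * y' * w, x * y' + x' * y, ?_⟩
    simp only [map_add, map_mul]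
    linear_combination algebraMap K L y * algebraMap K L y' * hβ

variable [CharZero K]

theorem exists_pow_four_cases_of_mem_adjoin_of_sq_eq {w : K} {β : L}
    (hβ : β ^ 2 = algebraMap K L w) {α : L} (hα : α ∈ K⟮β⟯) {c : K}
    (hc : α ^ 4 = algebraMap K L c) :
    ∃ γ : K, c = γ ^ 4 ∨ c = w ^ 2 * γ ^ 4 ∨ c = -4 * γ ^ 4 := by
  obtain ⟨x, y, rfl⟩ := exists_eq_add_mul_of_mem_adjoin_of_sq_eq hβ hα
  set P := (x ^ 2 + y ^ 2 * w) ^ 2 + 4 * x ^ 2 * y ^ 2 * w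
  set Q := 4 * x * y * (x ^ 2 + y ^ 2 * w)
  have hcPQ : algebraMap K L c = algebraMap K L P + algebraMap K L Q * β := by
    rw [← hc]
    simp only [P, Q, map_add, map_mul, map_pow, map_ofNat]
    linear_combination (algebraMap K L y ^ 2 * (β ^ 2 + algebraMap K L w)
      + 6 * algebraMap K L x ^ 2 + 4 * algebraMap K L x * algebraMap K L y * β) *
      algebraMap K L y ^ 2 * hβ
  by_cases hQ : Q = 0
  · have hcP : c = P := (algebraMap K L).injective (by simpa [hQ] using hcPQ)
    obtain (hx | hy) | hxy : (x = 0 ∨ y = 0) ∨ x ^ 2 + y ^ 2 * w = 0 := by simpa [Q] using hQ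
    · exact ⟨y, Or.inr (Or.inl (by simp only [hcP, P, hx]; ring))⟩
    · exact ⟨x, Or.inl (by simp only [hcP, P, hy]; ring)⟩
    · refine ⟨x, Or.inr (Or.inr ?_)⟩
      simp only [hcP, P]
      linear_combination (x ^ 2 + y ^ 2 * w + 4 * x ^ 2) * hxy
  · have hβK : β = algebraMap K L ((c - P) / Q) := by
      rw [map_div₀, map_sub, eq_div_iff (by simpa using hQ)]
      linear_combination -hcPQ
    refine ⟨x + y * ((c - P) / Q), Or.inl ((algebraMap K L).injective ?_)⟩
    rw [← hc, hβK]
    simp only [map_pow, map_add, map_mul]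

theorem exists_eq_sq_pow_mul_pow_four_of_mem_adjoin_of_sq_eq {i : K} (hi : i ^ 2 = -1)
    {w : K} {β : L} (hβ : β ^ 2 = algebraMap K L w) {α : L} (hα : α ∈ K⟮β⟯) {c : K}
    (hc : α ^ 4 = algebraMap K L c) :
    ∃ (k : ℕ) (γ : K), c = (w ^ 2) ^ k * γ ^ 4 := by
  obtain ⟨γ, h | h | h⟩ := exists_pow_four_cases_of_mem_adjoin_of_sq_eq hβ hα hc
  · exact ⟨0, γ, by rw [h, pow_zero, one_mul]⟩
  · exact ⟨1, γ, by rw [h, pow_one]⟩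
  · refine ⟨0, (1 + i) * γ, ?_⟩
    rw [h, mul_pow, one_add_pow_four_of_sq_eq_neg_one hi, pow_zero, one_mul]

theorem exists_eq_pow_mul_pow_four_of_mem_adjoin_of_pow_four_eq {i : K} (hi : i ^ 2 = -1)
    {b : K} (hb : b ≠ 0) {β : L} (hβ : β ^ 4 = algebraMap K L b) {α : L} (hα : α ∈ K⟮β⟯)
    {c : K} (hc : α ^ 4 = algebraMap K L c) :
    ∃ (k : ℕ) (γ : K), c = b ^ k * γ ^ 4 := by
  set E := K⟮β ^ 2⟯
  have hβ₂ : (β ^ 2) ^ 2 = algebraMap K L b := by rw [← pow_mul, hβ]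
  have hαE : α ∈ E⟮β⟯ := by
    have hle : K⟮β⟯ ≤ E⟮β⟯.restrictScalars K := by
      rw [adjoin_simple_le_iff, mem_restrictScalars]
      exact mem_adjoin_simple_self E β
    exact hle hα
  obtain ⟨k₁, γ₁, h₁⟩ := exists_eq_sq_pow_mul_pow_four_of_mem_adjoin_of_sq_eq
    (i := algebraMap K E i) (by rw [← map_pow, hi, map_neg, map_one])
    (w := ⟨β ^ 2, mem_adjoin_simple_self K _⟩) rfl hαE (c := algebraMap K E c)
    (by rw [hc, IsScalarTower.algebraMap_apply K E L])
  have h₁L : algebraMap K L c = algebraMap K L b ^ k₁ * (γ₁ : L) ^ 4 := by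
    simpa [hβ₂] using congrArg (algebraMap E L) h₁
  obtain ⟨k₂, γ, h₂⟩ := exists_eq_sq_pow_mul_pow_four_of_mem_adjoin_of_sq_eq hi hβ₂ γ₁.2
    (c := c / b ^ k₁)
    (by rw [map_div₀, map_pow, h₁L, mul_div_cancel_left₀ _ (by simpa using pow_ne_zero k₁ hb)])
  refine ⟨k₁ + 2 * k₂, γ, ?_⟩
  rw [div_eq_iff (pow_ne_zero _ hb)] at h₂
  rw [h₂, pow_add, pow_mul]
  ring

theorem exists_eq_prod_pow_mul_pow_four_of_mem_adjoin {i : K} (hi : i ^ 2 = -1) {n : ℕ}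
    {b : Fin n → K} (hb : ∀ j, b j ≠ 0) {r : Fin n → L} (hr : ∀ j, r j ^ 4 = algebraMap K L (b j))
    {α : L} (hα : α ∈ adjoin K (Set.range r)) {c : K} (hc : α ^ 4 = algebraMap K L c) :
    ∃ (k : Fin n → ℕ) (γ : K), c = (∏ j, b j ^ k j) * γ ^ 4 := by
  induction n generalizing α c with
  | zero =>
    rw [Set.range_eq_empty, adjoin_empty, mem_bot] at hα
    obtain ⟨γ, rfl⟩ := hα
    exact ⟨0, γ, (algebraMap K L).injective (by simp [← hc])⟩
  | succ n ih =>
    set E := adjoin K (Set.range (Fin.tail r))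
    have hαE : α ∈ E⟮r 0⟯ := by
      rw [← mem_restrictScalars K, adjoin_adjoin_left, Set.union_comm, ← Set.insert_eq,
        ← Fin.range_fin_succ]
      exact hα
    obtain ⟨k₀, γ₀, h₀⟩ := exists_eq_pow_mul_pow_four_of_mem_adjoin_of_pow_four_eq
      (i := algebraMap K E i) (by rw [← map_pow, hi, map_neg, map_one])
      (b := algebraMap K E (b 0)) (by simpa using hb 0)
      (by rw [hr, IsScalarTower.algebraMap_apply K E L]) hαE (c := algebraMap K E c)
      (by rw [hc, IsScalarTower.algebraMap_apply K E L])
    have hγ₀ : (γ₀ : L) ^ 4 = algebraMap K L (c / b 0 ^ k₀) := by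
      have := congrArg (algebraMap E L) h₀
      simp only [← IsScalarTower.algebraMap_apply, map_mul, map_pow] at this
      rw [map_div₀, map_pow, this, mul_div_cancel_left₀ _ (by simpa using pow_ne_zero k₀ (hb 0))]
      rfl
    obtain ⟨k, γ, hk⟩ := ih (fun j => hb j.succ) (fun j => hr j.succ) γ₀.2 hγ₀
    refine ⟨Fin.cons k₀ k, γ, ?_⟩
    rw [div_eq_iff (pow_ne_zero _ (hb 0))] at hk
    rw [Fin.prod_univ_succ, Fin.cons_zero]
    simp only [Fin.cons_succ]
    linear_combination hk

theorem exists_eq_neg_four_pow_mul_pow_four_of_mem_adjoin {i : L} (hi : i ^ 2 = -1) {α : L}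
    (hα : α ∈ K⟮i⟯) {c : K} (hc : α ^ 4 = algebraMap K L c) :
    ∃ (e : ℕ) (q : K), c = (-4) ^ e * q ^ 4 := by
  obtain ⟨q, h | h | h⟩ := exists_pow_four_cases_of_mem_adjoin_of_sq_eq
    (w := -1) (by rw [hi, map_neg, map_one]) hα hc
  · exact ⟨0, q, by rw [h, pow_zero, one_mul]⟩
  · exact ⟨0, q, by rw [h]; ring⟩
  · exact ⟨1, q, by rw [h, pow_one]⟩

theorem exists_eq_neg_four_pow_mul_prod_pow_mul_pow_four_of_mem_adjoin {i : L}
    (hi : i ^ 2 = -1) {n : ℕ} {b : Fin n → K} (hb : ∀ j, b j ≠ 0) {r : Fin n → L}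
    (hr : ∀ j, r j ^ 4 = algebraMap K L (b j)) {α : L} (hα : α ∈ adjoin K ({i} ∪ Set.range r))
    {c : K} (hc : α ^ 4 = algebraMap K L c) :
    ∃ (e₀ : ℕ) (k : Fin n → ℕ) (q : K), c = (-4) ^ e₀ * (∏ j, b j ^ k j) * q ^ 4 := by
  set E := K⟮i⟯
  rw [← adjoin_adjoin_left, mem_restrictScalars] at hα
  obtain ⟨k, γ, hγ⟩ := exists_eq_prod_pow_mul_pow_four_of_mem_adjoin
    (i := ⟨i, mem_adjoin_simple_self K i⟩) (Subtype.ext hi)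
    (b := fun j => algebraMap K E (b j)) (by simpa using hb)
    (fun j => by rw [hr, IsScalarTower.algebraMap_apply K E L]) hα (c := algebraMap K E c)
    (by rw [hc, IsScalarTower.algebraMap_apply K E L])
  have hprod : ∏ j, b j ^ k j ≠ 0 := Finset.prod_ne_zero_iff.mpr fun j _ => pow_ne_zero _ (hb j)
  have hγL : (γ : L) ^ 4 = algebraMap K L (c / ∏ j, b j ^ k j) := by
    have := congrArg (algebraMap E L) hγ
    simp only [← IsScalarTower.algebraMap_apply, ← map_pow, ← map_prod, map_mul] at this
    rw [map_div₀, this, mul_div_cancel_left₀ _ ((_root_.map_ne_zero _).mpr hprod), map_pow]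
    rfl
  obtain ⟨e₀, q, hq⟩ := exists_eq_neg_four_pow_mul_pow_four_of_mem_adjoin hi γ.2 hγL
  refine ⟨e₀, k, q, ?_⟩
  rw [div_eq_iff hprod] at hq
  linear_combination hq

end FourthRoots

theorem splits_X_pow_four_sub_C_pow_four {F : Type*} [Field F] {i : F} (hi : i ^ 2 = -1) (α : F) :
    (X ^ 4 - C (α ^ 4)).Splits := by
  have hfac : (X ^ 4 - C (α ^ 4) : F[X]) =
      (X - C α) * (X - C (-α)) * (X - C (i * α)) * (X - C (-(i * α))) := by
    have hCi : (C i : F[X]) ^ 2 = -1 := by rw [← map_pow, hi, map_neg, map_one]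
    simp only [map_neg, map_mul, map_pow]
    linear_combination (X ^ 2 * C α ^ 2 - C α ^ 4) * hCi
  rw [hfac]
  exact (((Splits.X_sub_C _).mul (Splits.X_sub_C _)).mul (Splits.X_sub_C _)).mul (Splits.X_sub_C _)

theorem statement_7 (n : ℕ) (b : Fin n → ℚ) (hb : ∀ i, b i ≠ 0) (d : ℚ) (hd : d ≠ 0)
    (s : AlgebraicClosure ℚ) (hs : s ^ 2 = -1)
    (r : Fin n → AlgebraicClosure ℚ) (hr : ∀ i, r i ^ 4 = algebraMap ℚ (AlgebraicClosure ℚ) (b i))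
    (F : IntermediateField ℚ (AlgebraicClosure ℚ))
    (hF : F = IntermediateField.adjoin ℚ ({s} ∪ Set.range r)) :
    Polynomial.Splits ((X ^ 4 - C (algebraMap ℚ F d)).map (RingHom.id F)) ↔
      ∃ (e₀ : ℤ) (e : Fin n → ℤ) (q : ℚ), q ≠ 0 ∧
        d = (-4 : ℚ) ^ e₀ * (∏ i, b i ^ e i) * q ^ 4 := by
  rw [Polynomial.map_id]
  constructor
  · intro hsplit
    obtain ⟨A, hA⟩ := hsplit.exists_eval_eq_zero (by rw [degree_X_pow_sub_C four_pos]; norm_num)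
    have hA4 : (A : AlgebraicClosure ℚ) ^ 4 = algebraMap ℚ _ d := by
      rw [eval_sub, eval_pow, eval_X, eval_C, sub_eq_zero] at hA
      rw [← IntermediateField.coe_pow, hA]
      rfl
    obtain ⟨e₀, k, q, hdq⟩ := exists_eq_neg_four_pow_mul_prod_pow_mul_pow_four_of_mem_adjoin
      hs hb hr (hF ▸ A.2) hA4
    refine ⟨e₀, fun i => k i, q, ?_, by simpa only [zpow_natCast] using hdq⟩
    rintro rfl
    exact hd (by simpa using hdq)
  · rintro ⟨e₀, e, q, -, rfl⟩
    set S : F := ⟨s, hF ▸ subset_adjoin ℚ _ (Or.inl rfl)⟩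
    set R : Fin n → F := fun i => ⟨r i, hF ▸ subset_adjoin ℚ _ (Or.inr ⟨i, rfl⟩)⟩
    have hS : S ^ 2 = -1 := Subtype.ext hs
    have hR : ∀ i, R i ^ 4 = algebraMap ℚ F (b i) := fun i => Subtype.ext (hr i)
    have hzpow (x : F) (m : ℤ) : (x ^ m) ^ 4 = (x ^ 4) ^ m := by
      simpa only [zpow_natCast] using zpow_comm x m (4 : ℕ)
    have hroot : ((1 + S) ^ e₀ * (∏ i, R i ^ e i) * algebraMap ℚ F q) ^ 4 =
        algebraMap ℚ F ((-4) ^ e₀ * (∏ i, b i ^ e i) * q ^ 4) := by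
      simp only [mul_pow, ← Finset.prod_pow, hzpow, one_add_pow_four_of_sq_eq_neg_one hS, hR]
      simp
    rw [← hroot]
    exact splits_X_pow_four_sub_C_pow_four hS _
end

section
/- Let G be a finite group of order 2ⁿ acting on a torsion abelian 2-primary group M. If the invariant subgroup M^G is killed by 2^m and the 4-torsion subgroup M₄ is contained in M^G, then M is killed by 2^{m+n}. -/
/-!
Induct on `n`. A nontrivial `2`-group has a central element `σ` of order `2`. The fixed points
`N = M^σ` form a `G`-stable subgroup on which `G ⧸ ⟨σ⟩` acts, with `N^{G/⟨σ⟩} = M^G` and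
`N₄ ⊆ M₄`, so by induction `2^(m+n-1)` kills `N`. For `x ∈ M`, `σx + x ∈ N`, while `d = σx - x`
satisfies `σd = -d`; if `2^k d = 0` with `k ≥ 2`, then `a = 2^(k-2) d` lies in `M₄`, so it is
fixed by `σ`, whence `2a = 0`. Descending, `2d = 0`, so `d ∈ M^G` and `2^m d = 0`. Finally
`2x = (σx + x) - (σx - x)`.
-/

open MulAction Subgroup

theorem two_nsmul_eq_zero_of_smul_eq_neg {G M : Type*} [Monoid G] [AddCommGroup M]
    [DistribMulAction G M] {σ : G} (hσ : ∀ x : M, 4 • x = 0 → σ • x = x)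
    {d : M} (hd : σ • d = -d) {k : ℕ} (hk : 2 ^ k • d = 0) : 2 • d = 0 := by
  induction k with
  | zero => simp_all
  | succ k ih =>
    rcases k with _ | k
    · simpa using hk
    refine ih ?_
    have h4 : 4 • (2 ^ k • d) = 0 := by rw [smul_smul, ← hk]; ring_nf
    have hfix := hσ _ h4
    rw [smul_comm, hd, smul_neg, neg_eq_iff_add_eq_zero] at hfix
    rwa [pow_succ, mul_nsmul, two_nsmul]

theorem two_mul_nsmul_eq_zero_of_nsmul_add_of_nsmul_sub {M : Type*} [AddCommGroup M]
    {a : ℕ} {x y : M} (hadd : a • (y + x) = 0) (hsub : a • (y - x) = 0) : (2 * a) • x = 0 := by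
  rw [mul_nsmul, two_nsmul, ← add_sub_sub_cancel y x x, smul_sub, hadd, hsub, sub_zero]

theorem exists_mem_center_orderOf_eq_of_card_eq_pow_succ {G : Type*} [Group G] {p n : ℕ}
    [Fact p.Prime] (hG : Nat.card G = p ^ (n + 1)) : ∃ σ ∈ center G, orderOf σ = p := by
  have : Finite G := Nat.finite_of_card_ne_zero (by simp [hG, (Fact.out : p.Prime).ne_zero])
  have : Nontrivial G := Finite.one_lt_card_iff_nontrivial.mp
    (hG ▸ Nat.one_lt_pow n.succ_ne_zero (Fact.out : p.Prime).one_lt)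
  have := (IsPGroup.of_card hG).center_nontrivial
  have hdvd : p ∣ Nat.card (center G) :=
    ((IsPGroup.of_card hG).to_subgroup (center G)).card_eq_or_dvd.resolve_left
      Finite.one_lt_card.ne'
  obtain ⟨z, hz⟩ := exists_prime_orderOf_dvd_card' p hdvd
  exact ⟨z, z.2, by rwa [Subgroup.orderOf_coe]⟩

theorem Subgroup.card_quotient_zpowers_of_orderOf_eq {G : Type*} [Group G] {σ : G} {p n : ℕ}
    (hp : 0 < p) (hσ : orderOf σ = p) (hG : Nat.card G = p ^ (n + 1)) :
    Nat.card (G ⧸ zpowers σ) = p ^ n := by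
  have := card_eq_card_quotient_mul_card_subgroup (zpowers σ)
  rw [Nat.card_zpowers, hσ, hG, pow_succ] at this
  exact (Nat.eq_of_mul_eq_mul_right hp this).symm

theorem Subgroup.normal_of_le_center {G : Type*} [Group G] {H : Subgroup G}
    (hH : H ≤ center G) : H.Normal :=
  ⟨fun n hn g => by rwa [mem_center_iff.mp (hH hn) g, mul_inv_cancel_right]⟩

namespace FixedPoints

variable {G M : Type*} [Group G] [AddCommGroup M] [DistribMulAction G M]

theorem mem_addSubgroup_zpowers_iff {σ : G} {x : M} :
    x ∈ addSubgroup (zpowers σ) M ↔ σ • x = x := by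
  rw [mem_addSubgroup, ← mem_stabilizer_iff, ← zpowers_le]
  exact ⟨fun h g hg => h ⟨g, hg⟩, fun h g => h g.2⟩

theorem smul_mem_addSubgroup {H : Subgroup G} [H.Normal] (g : G) {x : M}
    (hx : x ∈ addSubgroup H M) : g • x ∈ addSubgroup H M := by
  rintro ⟨h, hh⟩
  have hconj : (g⁻¹ * h * g) • x = x := hx ⟨_, by simpa using Normal.conj_mem ‹_› h hh g⁻¹⟩
  calc h • g • x = g • (g⁻¹ * h * g) • x := by simp [← mul_smul, ← mul_assoc]
    _ = g • x := by rw [hconj]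

instance {H : Subgroup G} [H.Normal] : DistribMulAction G (addSubgroup H M) where
  smul g x := ⟨g • x, smul_mem_addSubgroup g x.2⟩
  one_smul x := Subtype.ext (one_smul G (x : M))
  mul_smul g h x := Subtype.ext (mul_smul g h (x : M))
  smul_zero g := Subtype.ext (smul_zero g)
  smul_add g x y := Subtype.ext (smul_add g (x : M) y)

instance {H : Subgroup G} [H.Normal] : DistribMulAction (G ⧸ H) (addSubgroup H M) :=
  DistribMulAction.compHom (addSubgroup H M) <|
    QuotientGroup.lift H (DistribMulAction.toAddMonoidEnd G _) fun h hh =>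
      MonoidHom.mem_ker.2 <| AddMonoidHom.ext fun (x : addSubgroup H M) => Subtype.ext (x.2 ⟨h, hh⟩)

theorem forall_quotient_smul_eq_iff {H : Subgroup G} [H.Normal] {x : addSubgroup H M} :
    (∀ q : G ⧸ H, q • x = x) ↔ ∀ g : G, g • (x : M) = x :=
  ⟨fun hx g => congrArg Subtype.val (hx g), fun hx q =>
    QuotientGroup.induction_on q fun g => Subtype.ext (hx g)⟩

end FixedPoints

theorem statement_11 (G : Type*) [Group G] (M : Type*) [AddCommGroup M]
    [DistribMulAction G M]
    (n m : ℕ) (hG : Nat.card G = 2 ^ n)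
    -- `M` is a torsion 2-primary abelian group:
    (htors : ∀ x : M, ∃ k : ℕ, (2 ^ k : ℕ) • x = 0)
    -- `M^G` is killed by `2 ^ m`:
    (hinv : ∀ x : M, (∀ g : G, g • x = x) → (2 ^ m : ℕ) • x = 0)
    -- `M₄ ⊆ M^G`:
    (h4 : ∀ x : M, (4 : ℕ) • x = 0 → ∀ g : G, g • x = x) :
    ∀ x : M, (2 ^ (m + n) : ℕ) • x = 0 := by
  induction n generalizing G M with
  | zero =>
    have : Subsingleton G := (Nat.card_eq_one_iff_unique.mp hG).1
    exact fun x => hinv x fun g => by rw [Subsingleton.elim g 1, one_smul]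
  | succ n ih =>
    have : Fact (Nat.Prime 2) := ⟨Nat.prime_two⟩
    obtain ⟨σ, hσc, hσ⟩ := exists_mem_center_orderOf_eq_of_card_eq_pow_succ hG
    have : (zpowers σ).Normal := normal_of_le_center (zpowers_le.mpr hσc)
    have hN := ih (G ⧸ zpowers σ) (FixedPoints.addSubgroup (zpowers σ) M)
      (card_quotient_zpowers_of_orderOf_eq two_pos hσ hG)
      (fun y => (htors y).imp fun _ hk => Subtype.ext hk)
      (fun y hy => Subtype.ext <| hinv y (FixedPoints.forall_quotient_smul_eq_iff.mp hy))
      (fun y hy => FixedPoints.forall_quotient_smul_eq_iff.mpr <| h4 y (congrArg Subtype.val hy))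
    intro x
    have hσσ : σ • σ • x = x := by rw [smul_smul, ← sq, ← hσ, pow_orderOf_eq_one, one_smul]
    have hadd : 2 ^ (m + n) • (σ • x + x) = 0 := congrArg Subtype.val <|
      hN ⟨σ • x + x, FixedPoints.mem_addSubgroup_zpowers_iff.mpr (by rw [smul_add, hσσ, add_comm])⟩
    have hsub : 2 ^ m • (σ • x - x) = 0 := by
      obtain ⟨k, hk⟩ := htors (σ • x - x)
      have h2 := two_nsmul_eq_zero_of_smul_eq_neg (fun y hy => h4 y hy σ)
        (by rw [smul_sub, hσσ, neg_sub]) hk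
      exact hinv _ <| h4 _ (by rw [show 4 = 2 * 2 from rfl, mul_nsmul, h2, nsmul_zero])
    rw [← add_assoc, pow_succ, mul_comm]
    exact two_mul_nsmul_eq_zero_of_nsmul_add_of_nsmul_sub hadd
      (by rw [pow_add, mul_nsmul, hsub, nsmul_zero])
end
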